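/- Let U = exp((1/2)Σ_{j,k} h_{jk} γ_jγ_k + i Σ_j d_j γ_j) with h a real antisymmetric 2n×2n matrix and d ∈ ℝ^{2n} (U is unitary), and let O = (1/2)Σ_{j,k} M_{jk} γ_jγ_k + Σ_j v_j γ_j with M complex antisymmetric and v ∈ ℂ^{2n}. Then U O U† = (1/2)Σ_{j,k} A_{jk} γ_jγ_k + Σ_j u_j γ_j, where A (complex antisymmetric) and u ∈ ℂ^{2n} are determined by the matrix identity [[A, i·u],[−i·uᵀ, 0]] = R(h,d) · [[M, i·v],[−i·vᵀ, 0]] · R(h,d)ᵀ. -/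

import Mathlib

/-!
Read the pair `(M, v)` as the antisymmetric `(2n+1) × (2n+1)` matrix `[[M, i v], [-i vᵀ, 0]]`
and let `Φ` (`DG.extPoly`) send such a matrix back to `(1/2) Σ M_{jk} γ_j γ_k + Σ v_j γ_j`.
The Clifford relations `γ_j γ_k + γ_k γ_j = 2 δ_{jk}` make `Φ` a Lie algebra map up to a factor
two on `so(2n+1)`: `[Φ B, Φ C] = 2 Φ [B, C]`. The generator of `U` is `Φ G` with
`G = [[h, -d], [dᵀ, 0]]`, so `ad (Φ G) ∘ Φ = Φ ∘ ad (2G)`, and expanding both conjugations as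
`e^X Y e^{-X} = Σ_k (ad X)^k Y / k!` gives `U Φ(B) U† = Φ(e^{2G} B e^{-2G}) = Φ(R B Rᵀ)`.
-/

open scoped Matrix ComplexOrder

namespace DG

noncomputable section

/-- 2×2 Pauli matrices -/
def PX : Matrix (Fin 2) (Fin 2) ℂ := !![0, 1; 1, 0]
def PY : Matrix (Fin 2) (Fin 2) ℂ := !![0, -Complex.I; Complex.I, 0]
def PZ : Matrix (Fin 2) (Fin 2) ℂ := !![1, 0; 0, -1]

/-- Kronecker (tensor) product of `n` 2×2 matrices, as a matrix indexed by `Fin n → Fin 2`. -/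
def tensor {n : ℕ} (f : Fin n → Matrix (Fin 2) (Fin 2) ℂ) :
    Matrix (Fin n → Fin 2) (Fin n → Fin 2) ℂ :=
  Matrix.of fun x y => ∏ i, f i (x i) (y i)

/-- Majorana operators on `n` qubits via Jordan–Wigner (0-based indexing:
`γ (2j) = Z^{⊗j} ⊗ X ⊗ I`, `γ (2j+1) = Z^{⊗j} ⊗ Y ⊗ I`). -/
def γ (n : ℕ) (j : Fin (2 * n)) : Matrix (Fin n → Fin 2) (Fin n → Fin 2) ℂ :=
  tensor fun i =>
    if i.val < j.val / 2 then PZ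
    else if i.val = j.val / 2 then (if j.val % 2 = 0 then PX else PY)
    else 1

/-- Ordered (increasing) product `γ_J` over a finite index set `J`. -/
def γProd (n : ℕ) (J : Finset (Fin (2 * n))) :
    Matrix (Fin n → Fin 2) (Fin n → Fin 2) ℂ :=
  ((J.sort (· ≤ ·)).map (γ n)).prod

/-- Moments `A_J = Tr(γ_J† A)`. -/
def moment (n : ℕ) (A : Matrix (Fin n → Fin 2) (Fin n → Fin 2) ℂ)
    (J : Finset (Fin (2 * n))) : ℂ :=
  Matrix.trace ((γProd n J)ᴴ * A)

/-- The Grassmann algebra on `2n` anticommuting generators. -/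
abbrev Grass (n : ℕ) := ExteriorAlgebra ℂ (Fin (2 * n) → ℂ)

/-- Grassmann generators. -/
def η (n : ℕ) (j : Fin (2 * n)) : Grass n :=
  ExteriorAlgebra.ι ℂ (Pi.single j 1)

/-- Ordered product `η_J`. -/
def ηProd (n : ℕ) (J : Finset (Fin (2 * n))) : Grass n :=
  ((J.sort (· ≤ ·)).map (η n)).prod

/-- Fourier (Grassmann) transform `Ξ_A = Σ_J A_J η_J`. -/
def Xi (n : ℕ) (A : Matrix (Fin n → Fin 2) (Fin n → Fin 2) ℂ) : Grass n :=
  ∑ J : Finset (Fin (2 * n)), moment n A J • ηProd n J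

/-- Exponential in the Grassmann algebra as a finite power series. -/
def gExp (n : ℕ) (x : Grass n) : Grass n :=
  ∑ k ∈ Finset.range (2 * n + 1), ((k.factorial : ℂ))⁻¹ • x ^ k

/-- The Gaussian exponent `(i/2) Σ M_{jk} η_j η_k + Σ d_j η_j`. -/
def gaussArg (n : ℕ) (M : Matrix (Fin (2 * n)) (Fin (2 * n)) ℝ) (d : Fin (2 * n) → ℝ) :
    Grass n :=
  (Complex.I / 2) • ∑ j, ∑ k, (M j k : ℂ) • (η n j * η n k) + ∑ j, (d j : ℂ) • η n j

/-- `ρ` is a displaced Gaussian state (Fourier characterization). -/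
def IsDisplacedGaussian (n : ℕ) (ρ : Matrix (Fin n → Fin 2) (Fin n → Fin 2) ℂ) : Prop :=
  ∃ (M : Matrix (Fin (2 * n)) (Fin (2 * n)) ℝ) (d : Fin (2 * n) → ℝ),
    Mᵀ = -M ∧ Xi n ρ = gExp n (gaussArg n M d)

/-- `ρ` is an even Gaussian state (Fourier characterization with zero mean). -/
def IsEvenGaussian (n : ℕ) (ρ : Matrix (Fin n → Fin 2) (Fin n → Fin 2) ℂ) : Prop :=
  ∃ (M : Matrix (Fin (2 * n)) (Fin (2 * n)) ℝ),
    Mᵀ = -M ∧ Xi n ρ = gExp n (gaussArg n M 0)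

/-- Mean vector `μ(ρ)_j = Tr(γ_j ρ)`. -/
def meanVec (n : ℕ) (ρ : Matrix (Fin n → Fin 2) (Fin n → Fin 2) ℂ) (j : Fin (2 * n)) : ℂ :=
  Matrix.trace (γ n j * ρ)

/-- Antisymmetric covariance matrix: `Σ(ρ)_{jk} = Tr((γ_jγ_k)† ρ)` for `j < k`. -/
def covMat (n : ℕ) (ρ : Matrix (Fin n → Fin 2) (Fin n → Fin 2) ℂ) :
    Matrix (Fin (2 * n)) (Fin (2 * n)) ℂ :=
  Matrix.of fun j k =>
    if j < k then Matrix.trace ((γ n j * γ n k)ᴴ * ρ)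
    else if k < j then -Matrix.trace ((γ n k * γ n j)ᴴ * ρ)
    else 0

/-- The block matrix `[[M, i·d], [−i·dᵀ, 0]]`. -/
def extBlock {m : ℕ} (M : Matrix (Fin m) (Fin m) ℂ) (d : Fin m → ℂ) :
    Matrix (Fin (m + 1)) (Fin (m + 1)) ℂ :=
  Matrix.of fun a b =>
    if ha : a.val < m then
      (if hb : b.val < m then M ⟨a, ha⟩ ⟨b, hb⟩ else Complex.I * d ⟨a, ha⟩)
    else (if hb : b.val < m then -(Complex.I * d ⟨b, hb⟩) else 0)

/-- Extended covariance matrix `Σ̃(ρ) = [[Σ(ρ), i·μ(ρ)], [−i·μ(ρ)ᵀ, 0]]`. -/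
def extCov (n : ℕ) (ρ : Matrix (Fin n → Fin 2) (Fin n → Fin 2) ℂ) :
    Matrix (Fin (2 * n + 1)) (Fin (2 * n + 1)) ℂ :=
  extBlock (covMat n ρ) (meanVec n ρ)

/-- Displaced quadratic Hamiltonian exponent
`(1/2) Σ h_{jk} γ_j γ_k + i Σ d_j γ_j`. -/
def quadArg (n : ℕ) (h : Matrix (Fin (2 * n)) (Fin (2 * n)) ℝ) (d : Fin (2 * n) → ℝ) :
    Matrix (Fin n → Fin 2) (Fin n → Fin 2) ℂ :=
  (1 / 2 : ℂ) • ∑ j, ∑ k, (h j k : ℂ) • (γ n j * γ n k)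
    + Complex.I • ∑ j, (d j : ℂ) • γ n j

/-- The displaced Gaussian unitary `U = exp((1/2) Σ h_{jk} γ_jγ_k + i Σ d_j γ_j)`. -/
def dgUnitary (n : ℕ) (h : Matrix (Fin (2 * n)) (Fin (2 * n)) ℝ) (d : Fin (2 * n) → ℝ) :
    Matrix (Fin n → Fin 2) (Fin n → Fin 2) ℂ :=
  NormedSpace.exp (quadArg n h d)

/-- The real block matrix `[[h, −d], [dᵀ, 0]]`. -/
def extBlockR {m : ℕ} (h : Matrix (Fin m) (Fin m) ℝ) (d : Fin m → ℝ) :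
    Matrix (Fin (m + 1)) (Fin (m + 1)) ℝ :=
  Matrix.of fun a b =>
    if ha : a.val < m then
      (if hb : b.val < m then h ⟨a, ha⟩ ⟨b, hb⟩ else -d ⟨a, ha⟩)
    else (if hb : b.val < m then d ⟨b, hb⟩ else 0)

/-- The rotation `R(h,d) = exp(2·[[h, −d], [dᵀ, 0]]) ∈ SO(2n+1, ℝ)`. -/
def Rmat (n : ℕ) (h : Matrix (Fin (2 * n)) (Fin (2 * n)) ℝ) (d : Fin (2 * n) → ℝ) :
    Matrix (Fin (2 * n + 1)) (Fin (2 * n + 1)) ℝ :=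
  NormedSpace.exp ((2 : ℝ) • extBlockR h d)

/-- The Pfaffian of a `k × k` matrix (zero if `k` is odd; 1 for the empty matrix). -/
def pf {k : ℕ} (B : Matrix (Fin k) (Fin k) ℂ) : ℂ :=
  if h : k % 2 = 0 then
    ((2 : ℂ) ^ (k / 2) * ((k / 2).factorial : ℂ))⁻¹ *
      ∑ σ : Equiv.Perm (Fin k), (Equiv.Perm.sign σ : ℂ) *
        ∏ l : Fin (k / 2),
          B (σ ⟨2 * l.val, by have := l.isLt; omega⟩)
            (σ ⟨2 * l.val + 1, by have := l.isLt; omega⟩)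
  else 0

/-- Restriction `B|_J` of a matrix to the rows and columns indexed by `J` (in order). -/
def restr {N : ℕ} (B : Matrix (Fin N) (Fin N) ℂ) (J : Finset (Fin N)) :
    Matrix (Fin J.card) (Fin J.card) ℂ :=
  B.submatrix (J.orderEmbOfFin rfl) (J.orderEmbOfFin rfl)

/-- `J̃ = J` if `|J|` even, `J ∪ {2n+1}` if `|J|` odd. -/
def tilde {n : ℕ} (J : Finset (Fin (2 * n))) : Finset (Fin (2 * n + 1)) :=
  if Odd J.card then insert (Fin.last (2 * n)) (J.map Fin.castSuccEmb)
  else J.map Fin.castSuccEmb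

end

end DG
namespace DG
noncomputable section

/-- The quadratic polynomial `(1/2) Σ M_{jk} γ_jγ_k + Σ v_j γ_j` (complex coefficients). -/
def quadPolyC (n : ℕ) (M : Matrix (Fin (2 * n)) (Fin (2 * n)) ℂ) (v : Fin (2 * n) → ℂ) :
    Matrix (Fin n → Fin 2) (Fin n → Fin 2) ℂ :=
  (1 / 2 : ℂ) • ∑ j, ∑ k, M j k • (γ n j * γ n k) + ∑ j, v j • γ n j

/-- The Hermitian quadratic Hamiltonian `H = (i/2) Σ h_{jk} γ_jγ_k + Σ d_j γ_j`. -/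
def hamil (n : ℕ) (h : Matrix (Fin (2 * n)) (Fin (2 * n)) ℝ) (d : Fin (2 * n) → ℝ) :
    Matrix (Fin n → Fin 2) (Fin n → Fin 2) ℂ :=
  (Complex.I / 2) • ∑ j, ∑ k, (h j k : ℂ) • (γ n j * γ n k) + ∑ j, (d j : ℂ) • γ n j

/-- The diagonalized Gaussian state `⊗_j (I + λ_j Z)/2`. -/
def diagGauss (n : ℕ) (l : Fin n → ℝ) : Matrix (Fin n → Fin 2) (Fin n → Fin 2) ℂ :=
  tensor fun j => (2 : ℂ)⁻¹ • (1 + (l j : ℂ) • PZ)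

/-- The Pauli `Z` acting on line `j`: `Z_j = I^{⊗(j-1)} ⊗ Z ⊗ I^{⊗(n-j)}`. -/
def Zline (n : ℕ) (j : Fin n) : Matrix (Fin n → Fin 2) (Fin n → Fin 2) ℂ :=
  tensor fun i => if i = j then PZ else 1

/-- Measurement projector `O(K,x) = Π_{j ∈ K} (I + (−1)^{x_j} Z_j)/2`. -/
def measOp (n : ℕ) (K : Finset (Fin n)) (x : Fin n → Bool) :
    Matrix (Fin n → Fin 2) (Fin n → Fin 2) ℂ :=
  ((K.sort (· ≤ ·)).map
    (fun j => (2 : ℂ)⁻¹ • (1 + (if x j then (-1 : ℂ) else 1) • Zline n j))).prod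

/-- Tensoring a 2×2 matrix on a new last qubit line: `A ⊗ u`. -/
def extQ {n : ℕ} (A : Matrix (Fin n → Fin 2) (Fin n → Fin 2) ℂ)
    (u : Matrix (Fin 2) (Fin 2) ℂ) :
    Matrix (Fin (n + 1) → Fin 2) (Fin (n + 1) → Fin 2) ℂ :=
  Matrix.of fun a b =>
    A (fun i => a i.castSucc) (fun i => b i.castSucc) * u (a (Fin.last n)) (b (Fin.last n))

/-- The state `|+⟩⟨+|`. -/
def plusState : Matrix (Fin 2) (Fin 2) ℂ := (2 : ℂ)⁻¹ • !![1, 1; 1, 1]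

/-- The extended antisymmetric generator `h̃` of the even embedding of a displaced
Gaussian unitary. -/
def htilde {n : ℕ} (h : Matrix (Fin (2 * n)) (Fin (2 * n)) ℝ) (d : Fin (2 * n) → ℝ) :
    Matrix (Fin (2 * (n + 1))) (Fin (2 * (n + 1))) ℝ :=
  Matrix.of fun j k =>
    if hj : j.val < 2 * n then
      (if hk : k.val < 2 * n then h ⟨j, hj⟩ ⟨k, hk⟩
       else if k.val = 2 * n + 1 then -d ⟨j, hj⟩ else 0)
    else if j.val = 2 * n + 1 then (if hk : k.val < 2 * n then d ⟨k, hk⟩ else 0) else 0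

/-- The embedding unitary `V = exp(−i (π/4) γ_{2n+2})` on `n+1` qubits. -/
def embedV (n : ℕ) : Matrix (Fin (n + 1) → Fin 2) (Fin (n + 1) → Fin 2) ℂ :=
  NormedSpace.exp ((-(Real.pi / 4 : ℝ) * Complex.I) • γ (n + 1) ⟨2 * n + 1, by omega⟩)

end
end DG

open NormedSpace Matrix
open scoped Nat

section BanachAlgebra

variable {𝔸 : Type*} [NormedRing 𝔸] [NormedAlgebra ℚ 𝔸] [CompleteSpace 𝔸]

theorem ContinuousLinearMap.hasSum_exp_apply {E : Type*} [NormedAddCommGroup E] [NormedSpace ℚ E]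
    [CompleteSpace E] (T : E →L[ℚ] E) (z : E) :
    HasSum (fun k => (k !⁻¹ : ℚ) • (T ^ k) z) (exp T z) := by
  simpa using (exp_series_hasSum_exp' (𝕂 := ℚ) T).mapL (ContinuousLinearMap.apply ℚ E z)

theorem ContinuousLinearMap.exp_mul_apply (x z : 𝔸) :
    exp (ContinuousLinearMap.mul ℚ 𝔸 x) z = exp x * z := by
  have hpow : ∀ k, (ContinuousLinearMap.mul ℚ 𝔸 x ^ k) z = x ^ k * z := by
    intro k
    induction k with
    | zero => simp
    | succ k ih => rw [pow_succ', mul_apply_eq_comp, ih, pow_succ', mul_assoc]; rfl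
  refine (hasSum_exp_apply _ z).unique ?_
  simpa [hpow, smul_mul_assoc] using (exp_series_hasSum_exp' (𝕂 := ℚ) x).mul_right z

theorem ContinuousLinearMap.exp_mul_flip_apply (x z : 𝔸) :
    exp ((ContinuousLinearMap.mul ℚ 𝔸).flip x) z = z * exp x := by
  have hpow : ∀ k z, ((ContinuousLinearMap.mul ℚ 𝔸).flip x ^ k) z = z * x ^ k := by
    intro k
    induction k with
    | zero => simp
    | succ k ih => intro z; rw [pow_succ, mul_apply_eq_comp, ih, pow_succ', ← mul_assoc]; rfl
  refine (hasSum_exp_apply _ z).unique ?_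
  simpa [hpow, mul_smul_comm] using (exp_series_hasSum_exp' (𝕂 := ℚ) x).mul_left z

-- `ad x` is the sum of the commuting operators "multiply by `x` on the left" and
-- "multiply by `-x` on the right", so its exponential is conjugation by `exp x`.
theorem hasSum_exp_mul_mul_exp_neg (x y : 𝔸) :
    HasSum (fun k => (k !⁻¹ : ℚ) • (fun z => x * z - z * x)^[k] y) (exp x * y * exp (-x)) := by
  set T := ContinuousLinearMap.mul ℚ 𝔸 x + (ContinuousLinearMap.mul ℚ 𝔸).flip (-x) with hT
  have hcomm : Commute (ContinuousLinearMap.mul ℚ 𝔸 x) ((ContinuousLinearMap.mul ℚ 𝔸).flip (-x)) :=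
    ContinuousLinearMap.ext fun z => (mul_assoc x z (-x)).symm
  have hpow : ∀ k, (T ^ k) y = (fun z => x * z - z * x)^[k] y := by
    intro k
    induction k with
    | zero => simp
    | succ k ih =>
      rw [pow_succ', mul_apply_eq_comp, ih, Function.iterate_succ_apply']
      simp [hT, sub_eq_add_neg]
  have h := ContinuousLinearMap.hasSum_exp_apply T y
  rwa [hT, exp_add_of_commute hcomm, mul_apply_eq_comp, ContinuousLinearMap.exp_mul_flip_apply,
    ContinuousLinearMap.exp_mul_apply, ← mul_assoc, ← hT, funext fun k => congrArg _ (hpow k)] at h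

theorem map_exp_mul_mul_exp_neg {𝔹 F : Type*} [NormedRing 𝔹] [NormedAlgebra ℚ 𝔹]
    [CompleteSpace 𝔹] [FunLike F 𝔸 𝔹] [AddMonoidHomClass F 𝔸 𝔹] (Φ : F) (hΦ : Continuous Φ)
    {S : Set 𝔸} {x : 𝔸} {t : 𝔹} (hS : ∀ y ∈ S, x * y - y * x ∈ S)
    (hΦS : ∀ y ∈ S, Φ (x * y - y * x) = t * Φ y - Φ y * t) {y : 𝔸} (hy : y ∈ S) :
    Φ (exp x * y * exp (-x)) = exp t * Φ y * exp (-t) := by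
  have hiter : ∀ k, (fun z => x * z - z * x)^[k] y ∈ S ∧
      Φ ((fun z => x * z - z * x)^[k] y) = (fun z => t * z - z * t)^[k] (Φ y) := by
    intro k
    induction k with
    | zero => exact ⟨hy, rfl⟩
    | succ k ih =>
      simp only [Function.iterate_succ_apply']
      exact ⟨hS _ ih.1, by rw [hΦS _ ih.1, ih.2]⟩
  refine ((hasSum_exp_mul_mul_exp_neg x y).map Φ hΦ).unique ?_
  simpa only [Function.comp_def, map_rat_smul, (hiter _).2] using
    hasSum_exp_mul_mul_exp_neg t (Φ y)

end BanachAlgebra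

open scoped Matrix.Norms.Operator in
theorem Matrix.map_exp_mul_mul_exp_neg {p q : Type*} [Fintype p] [DecidableEq p] [Fintype q]
    [DecidableEq q] (Φ : Matrix p p ℂ →ₗ[ℂ] Matrix q q ℂ)
    {S : Set (Matrix p p ℂ)} {x : Matrix p p ℂ} {t : Matrix q q ℂ}
    (hS : ∀ y ∈ S, x * y - y * x ∈ S)
    (hΦS : ∀ y ∈ S, Φ (x * y - y * x) = t * Φ y - Φ y * t) {y : Matrix p p ℂ} (hy : y ∈ S) :
    Φ (exp x * y * exp (-x)) = exp t * Φ y * exp (-t) :=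
  _root_.map_exp_mul_mul_exp_neg Φ Φ.continuous_of_finiteDimensional hS hΦS hy

open scoped Matrix.Norms.Operator in
theorem Matrix.map_ofReal_exp {p : Type*} [Fintype p] [DecidableEq p] (A : Matrix p p ℝ) :
    (exp A).map Complex.ofReal = exp (A.map Complex.ofReal) :=
  map_exp Complex.ofRealHom.mapMatrix (continuous_id.matrix_map Complex.continuous_ofReal) A

theorem Matrix.transpose_commutator_eq_neg {ι R : Type*} [Fintype ι] [CommRing R]
    {X Y : Matrix ι ι R} (hX : Xᵀ = -X) (hY : Yᵀ = -Y) :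
    (X * Y - Y * X)ᵀ = -(X * Y - Y * X) := by
  rw [transpose_sub, transpose_mul, transpose_mul, hX, hY]
  noncomm_ring

def CliffordRelations {A ι : Type*} [Ring A] [DecidableEq ι] (g : ι → A) : Prop :=
  ∀ a b, g a * g b + g b * g a = if a = b then 2 else 0

section CliffordSums

variable {𝕜 A ι : Type*} [CommRing 𝕜] [Ring A] [Algebra 𝕜 A] [Fintype ι] (g : ι → A)

def quadSum : Matrix ι ι 𝕜 →ₗ[𝕜] A where
  toFun M := ∑ j, ∑ k, M j k • (g j * g k)
  map_add' M N := by simp only [Matrix.add_apply, add_smul, Finset.sum_add_distrib]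
  map_smul' c M := by
    simp only [Matrix.smul_apply, smul_eq_mul, mul_smul, Finset.smul_sum, RingHom.id_apply]

def linSum : (ι → 𝕜) →ₗ[𝕜] A where
  toFun v := ∑ j, v j • g j
  map_add' v w := by simp only [Pi.add_apply, add_smul, Finset.sum_add_distrib]
  map_smul' c v := by
    simp only [Pi.smul_apply, smul_eq_mul, mul_smul, Finset.smul_sum, RingHom.id_apply]

lemma quadSum_apply (M : Matrix ι ι 𝕜) : quadSum g M = ∑ j, ∑ k, M j k • (g j * g k) := rfl

lemma linSum_apply (v : ι → 𝕜) : linSum g v = ∑ j, v j • g j := rfl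

lemma linSum_single [DecidableEq ι] (a : ι) : linSum g (Pi.single a (1 : 𝕜)) = g a := by
  simp [linSum_apply, Pi.single_apply]

lemma linSum_mul_linSum (v w : ι → 𝕜) :
    linSum g v * linSum g w = quadSum g (vecMulVec v w) := by
  simp only [linSum_apply, quadSum_apply, Finset.sum_mul, Finset.mul_sum, vecMulVec_apply,
    smul_mul_smul_comm]
  exact Finset.sum_comm

lemma linSum_commutator_linSum (v w : ι → 𝕜) :
    linSum g v * linSum g w - linSum g w * linSum g v =
      quadSum g (vecMulVec v w - vecMulVec w v) := by
  rw [linSum_mul_linSum, linSum_mul_linSum, map_sub]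

variable [DecidableEq ι] {g} (hg : CliffordRelations g)
include hg

omit [Fintype ι] in
lemma mul_commutator_of_cliffordRelations (j k a : ι) :
    g j * g k * g a - g a * (g j * g k) =
      (if k = a then 2 * g j else 0) - (if j = a then 2 * g k else 0) := by
  calc g j * g k * g a - g a * (g j * g k)
      = g j * (g k * g a + g a * g k) - (g j * g a + g a * g j) * g k := by noncomm_ring
    _ = _ := by rw [hg k a, hg j a]; split_ifs <;> simp [mul_two, two_mul]

lemma quadSum_commutator (M : Matrix ι ι 𝕜) (a : ι) :
    quadSum g M * g a - g a * quadSum g M = (2 : 𝕜) • linSum g (fun j => (M - Mᵀ) j a) := by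
  calc quadSum g M * g a - g a * quadSum g M
      = ∑ j, ∑ k, M j k • (g j * g k * g a - g a * (g j * g k)) := by
        simp only [quadSum_apply, Finset.sum_mul, Finset.mul_sum, smul_mul_assoc,
          mul_smul_comm, smul_sub, Finset.sum_sub_distrib]
    _ = ∑ j, M j a • (2 * g j) - ∑ k, M a k • (2 * g k) := by
        simp only [mul_commutator_of_cliffordRelations hg, smul_sub, smul_ite, smul_zero,
          Finset.sum_sub_distrib, Finset.sum_ite_eq', Finset.mem_univ, if_true]
        rw [Finset.sum_comm (s := Finset.univ) (t := Finset.univ)]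
        simp
    _ = _ := by
        simp only [linSum_apply, Matrix.sub_apply, transpose_apply, sub_smul,
          Finset.sum_sub_distrib, smul_sub, Finset.smul_sum, two_smul, two_mul, smul_add]

lemma quadSum_commutator_linSum (M : Matrix ι ι 𝕜) (v : ι → 𝕜) :
    quadSum g M * linSum g v - linSum g v * quadSum g M =
      (2 : 𝕜) • linSum g ((M - Mᵀ) *ᵥ v) := by
  calc quadSum g M * linSum g v - linSum g v * quadSum g M
      = ∑ a, v a • (quadSum g M * g a - g a * quadSum g M) := by
        simp only [linSum_apply g v, Finset.mul_sum, Finset.sum_mul, mul_smul_comm,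
          smul_mul_assoc, smul_sub, Finset.sum_sub_distrib]
    _ = _ := by
        simp only [quadSum_commutator hg, ← map_smul, ← map_sum]
        congr 1
        ext j
        simp only [Pi.smul_apply, Matrix.sub_apply, transpose_apply, mulVec, dotProduct,
          smul_eq_mul, Finset.mul_sum, Finset.sum_apply]
        exact Finset.sum_congr rfl fun _ _ => by ring

lemma quadSum_commutator_quadSum (M N : Matrix ι ι 𝕜) :
    quadSum g M * quadSum g N - quadSum g N * quadSum g M =
      (2 : 𝕜) • quadSum g ((M - Mᵀ) * N - N * (M - Mᵀ)) := by
  calc quadSum g M * quadSum g N - quadSum g N * quadSum g M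
      = ∑ a, ∑ b, N a b • ((quadSum g M * g a - g a * quadSum g M) * g b
          + g a * (quadSum g M * g b - g b * quadSum g M)) := by
        simp only [quadSum_apply g N, Finset.mul_sum, Finset.sum_mul, mul_smul_comm,
          smul_mul_assoc, ← Finset.sum_sub_distrib, ← smul_sub]
        congr! 3
        noncomm_ring
    _ = (2 : 𝕜) • quadSum g (∑ a, ∑ b, N a b •
          (vecMulVec (fun j => (M - Mᵀ) j a) (Pi.single b (1 : 𝕜))
            + vecMulVec (Pi.single a (1 : 𝕜)) (fun j => (M - Mᵀ) j b))) := by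
        simp only [quadSum_commutator hg, smul_mul_assoc, mul_smul_comm, ← smul_add, map_sum,
          map_smul, map_add, ← linSum_mul_linSum, linSum_single, Finset.smul_sum]
        simp only [smul_comm (2 : 𝕜)]
    _ = _ := by
        congr 2
        ext j k
        simp only [Matrix.sum_apply, Matrix.smul_apply, Matrix.add_apply, Matrix.sub_apply,
          Matrix.mul_apply, vecMulVec_apply, transpose_apply, Pi.single_apply, smul_eq_mul,
          mul_ite, ite_mul, mul_one, one_mul, mul_zero, zero_mul]
        simp only [mul_add, mul_ite, mul_zero, Finset.sum_add_distrib, Finset.sum_ite_eq,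
          Finset.sum_ite_irrel, Finset.sum_const_zero, Finset.mem_univ, if_true]
        rw [sub_eq_add_neg, ← Finset.sum_neg_distrib]
        congr 1 <;> exact Finset.sum_congr rfl fun _ _ => by ring

end CliffordSums

section CliffordPoly

variable {𝕜 A ι : Type*} [Field 𝕜] [Ring A] [Algebra 𝕜 A] [Fintype ι] (g : ι → A)

def cliffPoly (M : Matrix ι ι 𝕜) (v : ι → 𝕜) : A := (1 / 2 : 𝕜) • quadSum g M + linSum g v

lemma cliffPoly_neg (M : Matrix ι ι 𝕜) (v : ι → 𝕜) :
    cliffPoly g (-M) (-v) = -cliffPoly g M v := by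
  simp only [cliffPoly, map_neg, smul_neg, neg_add]

variable {g}

lemma star_cliffPoly [StarRing 𝕜] [StarRing A] [StarModule 𝕜 A]
    (hg : ∀ j, star (g j) = g j) (M : Matrix ι ι 𝕜) (v : ι → 𝕜) :
    star (cliffPoly g M v) = cliffPoly g Mᴴ (star v) := by
  simp only [cliffPoly, quadSum_apply, linSum_apply, star_add, star_smul, star_sum, star_mul, hg,
    star_div₀, star_one, star_ofNat, conjTranspose_apply, Pi.star_apply]
  rw [Finset.sum_comm (f := fun j k => star (M j k) • (g k * g j))]

lemma cliffPoly_commutator [CharZero 𝕜] [DecidableEq ι] (hg : CliffordRelations g)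
    {H N : Matrix ι ι 𝕜} (hH : Hᵀ = -H) (hN : Nᵀ = -N) (v w : ι → 𝕜) :
    cliffPoly g H v * cliffPoly g N w - cliffPoly g N w * cliffPoly g H v =
      (2 : 𝕜) • cliffPoly g (H * N - N * H + vecMulVec v w - vecMulVec w v)
        (H *ᵥ w - N *ᵥ v) := by
  have e1 := quadSum_commutator_quadSum hg H N
  have e2 := quadSum_commutator_linSum hg H w
  have e3 := quadSum_commutator_linSum hg N v
  have e4 := linSum_commutator_linSum g v w
  rw [hH, sub_neg_eq_add] at e1 e2
  rw [hN, sub_neg_eq_add] at e3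
  simp only [add_mul, mul_add, add_mulVec, map_add, map_sub] at e1 e2 e3 e4 ⊢
  unfold cliffPoly
  simp only [add_mul, mul_add, smul_mul_assoc, mul_smul_comm, smul_add, map_add, map_sub]
  linear_combination (norm := module) (1 / 4 : 𝕜) • e1 + (1 / 2 : 𝕜) • e2 - (1 / 2 : 𝕜) • e3 + e4

end CliffordPoly

namespace DG

lemma PX_mul_self : PX * PX = 1 := by
  ext i j; fin_cases i <;> fin_cases j <;> simp [PX, Matrix.mul_apply, Fin.sum_univ_two]

lemma PY_mul_self : PY * PY = 1 := by
  ext i j; fin_cases i <;> fin_cases j <;> simp [PY, Matrix.mul_apply, Fin.sum_univ_two]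

lemma PZ_mul_self : PZ * PZ = 1 := by
  ext i j; fin_cases i <;> fin_cases j <;> simp [PZ, Matrix.mul_apply, Fin.sum_univ_two]

lemma PX_mul_PY : PX * PY = -(PY * PX) := by
  ext i j; fin_cases i <;> fin_cases j <;> simp [PX, PY, Matrix.mul_apply, Fin.sum_univ_two]

lemma PX_mul_PZ : PX * PZ = -(PZ * PX) := by
  ext i j; fin_cases i <;> fin_cases j <;> simp [PX, PZ, Matrix.mul_apply, Fin.sum_univ_two]

lemma PY_mul_PZ : PY * PZ = -(PZ * PY) := by
  ext i j; fin_cases i <;> fin_cases j <;> simp [PY, PZ, Matrix.mul_apply, Fin.sum_univ_two]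

lemma PX_conjTranspose : PXᴴ = PX := by
  ext i j; fin_cases i <;> fin_cases j <;> simp [PX]

lemma PY_conjTranspose : PYᴴ = PY := by
  ext i j; fin_cases i <;> fin_cases j <;> simp [PY]

lemma PZ_conjTranspose : PZᴴ = PZ := by
  ext i j; fin_cases i <;> fin_cases j <;> simp [PZ]

section Tensor

variable {n : ℕ}

lemma tensor_mul (f g : Fin n → Matrix (Fin 2) (Fin 2) ℂ) :
    tensor f * tensor g = tensor (fun i => f i * g i) := by
  ext x y
  simp only [tensor, Matrix.mul_apply, Matrix.of_apply, Finset.prod_univ_sum,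
    Fintype.piFinset_univ]
  exact Finset.sum_congr rfl fun z _ => Finset.prod_mul_distrib.symm

lemma tensor_one : tensor (fun _ : Fin n => (1 : Matrix (Fin 2) (Fin 2) ℂ)) = 1 := by
  ext x y
  simp [tensor, Matrix.one_apply, Finset.prod_boole, funext_iff]

lemma tensor_conjTranspose (f : Fin n → Matrix (Fin 2) (Fin 2) ℂ) :
    (tensor f)ᴴ = tensor (fun i => (f i)ᴴ) := by
  ext x y
  simp [tensor]

lemma tensor_mul_self_eq_one {f : Fin n → Matrix (Fin 2) (Fin 2) ℂ} (hf : ∀ i, f i * f i = 1) :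
    tensor f * tensor f = 1 := by
  rw [tensor_mul, funext hf, tensor_one]

lemma tensor_anticomm {f g : Fin n → Matrix (Fin 2) (Fin 2) ℂ} (i₀ : Fin n)
    (h₀ : f i₀ * g i₀ = -(g i₀ * f i₀)) (hcomm : ∀ i ≠ i₀, f i * g i = g i * f i) :
    tensor f * tensor g = -(tensor g * tensor f) := by
  rw [tensor_mul, tensor_mul]
  ext x y
  simp only [tensor, Matrix.of_apply, Matrix.neg_apply]
  rw [← Finset.mul_prod_erase _ _ (Finset.mem_univ i₀),
    ← Finset.mul_prod_erase _ (fun i => (g i * f i) (x i) (y i)) (Finset.mem_univ i₀), h₀,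
    Matrix.neg_apply, neg_mul,
    Finset.prod_congr rfl fun i hi => by rw [hcomm i (Finset.ne_of_mem_erase hi)]]

end Tensor

section Majorana

variable {n : ℕ}

lemma γ_mul_self (j : Fin (2 * n)) : γ n j * γ n j = 1 := by
  refine tensor_mul_self_eq_one fun i => ?_
  split_ifs <;> simp [PX_mul_self, PY_mul_self, PZ_mul_self]

lemma γ_anticomm_of_lt {j k : Fin (2 * n)} (hjk : j < k) : γ n j * γ n k = -(γ n k * γ n j) := by
  have hjk' : (j : ℕ) < k := hjk
  refine tensor_anticomm ⟨j / 2, by omega⟩ ?_ fun i hi => ?_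
  · rcases (Nat.div_le_div_right (c := 2) hjk'.le).eq_or_lt with hsite | hsite
    · -- Both act on the same qubit: `j` is even and `k = j + 1`.
      have hj : (j : ℕ) % 2 = 0 := by omega
      have hk : (k : ℕ) % 2 = 1 := by omega
      simp [hsite, hj, hk, PX_mul_PY]
    · by_cases hj : (j : ℕ) % 2 = 0 <;> simp [hsite, hj, PX_mul_PZ, PY_mul_PZ]
  · have hi' : (i : ℕ) ≠ j / 2 := fun h => hi (Fin.ext h)
    by_cases hlt : (i : ℕ) < j / 2
    · simp [hlt, show (i : ℕ) < k / 2 by omega]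
    · simp [hlt, hi']

lemma cliffordRelations_γ : CliffordRelations (γ n) := by
  intro j k
  rcases lt_trichotomy j k with hjk | rfl | hjk
  · simp [γ_anticomm_of_lt hjk, hjk.ne]
  · simp [γ_mul_self, one_add_one_eq_two]
  · simp [γ_anticomm_of_lt hjk, hjk.ne']

lemma γ_conjTranspose (j : Fin (2 * n)) : (γ n j)ᴴ = γ n j := by
  rw [γ, tensor_conjTranspose]
  congr 1
  funext i
  split_ifs <;> simp [PX_conjTranspose, PY_conjTranspose, PZ_conjTranspose]

end Majorana

section ExtBlock

variable {m : ℕ}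

@[simp] lemma extBlock_castSucc_castSucc (M : Matrix (Fin m) (Fin m) ℂ) (v : Fin m → ℂ)
    (j k : Fin m) : extBlock M v j.castSucc k.castSucc = M j k := by
  simp [extBlock]

@[simp] lemma extBlock_castSucc_last (M : Matrix (Fin m) (Fin m) ℂ) (v : Fin m → ℂ) (j : Fin m) :
    extBlock M v j.castSucc (Fin.last m) = Complex.I * v j := by
  simp [extBlock]

@[simp] lemma extBlock_last_castSucc (M : Matrix (Fin m) (Fin m) ℂ) (v : Fin m → ℂ) (k : Fin m) :
    extBlock M v (Fin.last m) k.castSucc = -(Complex.I * v k) := by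
  simp [extBlock]

@[simp] lemma extBlock_last_last (M : Matrix (Fin m) (Fin m) ℂ) (v : Fin m → ℂ) :
    extBlock M v (Fin.last m) (Fin.last m) = 0 := by
  simp [extBlock]

lemma transpose_extBlock {M : Matrix (Fin m) (Fin m) ℂ} (hM : Mᵀ = -M) (v : Fin m → ℂ) :
    (extBlock M v)ᵀ = -extBlock M v := by
  have hM' : ∀ a b, M b a = -M a b := fun a b => by simpa using congrFun (congrFun hM a) b
  ext a b
  induction a using Fin.lastCases <;> induction b using Fin.lastCases
  case cast.cast j k => simpa using hM' j k
  all_goals simp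

lemma exists_extBlock_of_transpose_eq_neg {B : Matrix (Fin (m + 1)) (Fin (m + 1)) ℂ}
    (hB : Bᵀ = -B) : ∃ M v, Mᵀ = -M ∧ B = extBlock M v := by
  have hB' : ∀ a b, B b a = -B a b := fun a b => by simpa using congrFun (congrFun hB a) b
  refine ⟨B.submatrix Fin.castSucc Fin.castSucc, fun j => -Complex.I * B j.castSucc (Fin.last m),
    by ext j k; exact hB' _ _, ?_⟩
  ext a b
  induction a using Fin.lastCases <;> induction b using Fin.lastCases
  · rw [extBlock_last_last]
    linear_combination (hB' (Fin.last m) (Fin.last m)) / 2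
  · simp [← mul_assoc, hB' _ (Fin.last m)]
  · simp [← mul_assoc]
  · simp

lemma extBlock_commutator {H N : Matrix (Fin m) (Fin m) ℂ} (hH : Hᵀ = -H) (hN : Nᵀ = -N)
    (v w : Fin m → ℂ) :
    extBlock H v * extBlock N w - extBlock N w * extBlock H v =
      extBlock (H * N - N * H + vecMulVec v w - vecMulVec w v) (H *ᵥ w - N *ᵥ v) := by
  have hH' : ∀ a b, H b a = -H a b := fun a b => by simpa using congrFun (congrFun hH a) b
  have hN' : ∀ a b, N b a = -N a b := fun a b => by simpa using congrFun (congrFun hN a) b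
  ext a b
  induction a using Fin.lastCases with
  | last =>
    induction b using Fin.lastCases with
    | last =>
      simp only [Matrix.sub_apply, Matrix.mul_apply, Fin.sum_univ_castSucc, extBlock_last_castSucc,
        extBlock_castSucc_last, extBlock_last_last, mul_zero, add_zero]
      rw [← Finset.sum_sub_distrib]
      exact Finset.sum_eq_zero fun x _ => by ring
    | cast k =>
      simp only [Matrix.sub_apply, Matrix.mul_apply, Fin.sum_univ_castSucc, extBlock_last_castSucc,
        extBlock_castSucc_castSucc, extBlock_last_last, zero_mul, add_zero, mulVec, dotProduct,
        Pi.sub_apply, mul_sub, Finset.mul_sum, ← Finset.sum_sub_distrib, ← Finset.sum_neg_distrib]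
      exact Finset.sum_congr rfl fun x _ => by rw [hH' k x, hN' k x]; ring
  | cast j =>
    induction b using Fin.lastCases with
    | last =>
      simp only [Matrix.sub_apply, Matrix.mul_apply, Fin.sum_univ_castSucc, extBlock_castSucc_last,
        extBlock_castSucc_castSucc, extBlock_last_last, mul_zero, add_zero, mulVec, dotProduct,
        Pi.sub_apply, mul_sub, Finset.mul_sum, ← Finset.sum_sub_distrib]
      exact Finset.sum_congr rfl fun x _ => by ring
    | cast k =>
      simp only [Matrix.sub_apply, Matrix.add_apply, Matrix.mul_apply, Fin.sum_univ_castSucc,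
        extBlock_castSucc_last, extBlock_last_castSucc, extBlock_castSucc_castSucc,
        vecMulVec_apply]
      linear_combination (w j * v k - v j * w k) * Complex.I_sq

end ExtBlock

section ExtPoly

variable {A : Type*} [Ring A] [Algebra ℂ A] {m : ℕ}

noncomputable def extPoly (g : Fin m → A) : Matrix (Fin (m + 1)) (Fin (m + 1)) ℂ →ₗ[ℂ] A where
  toFun B := cliffPoly g (B.submatrix Fin.castSucc Fin.castSucc)
    (fun j => -Complex.I * B j.castSucc (Fin.last m))
  map_add' B C := by
    have hv : (fun j : Fin m => -Complex.I * (B + C) j.castSucc (Fin.last m)) =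
        (fun j => -Complex.I * B j.castSucc (Fin.last m)) +
          (fun j => -Complex.I * C j.castSucc (Fin.last m)) := funext fun j => mul_add _ _ _
    have hM : (B + C).submatrix Fin.castSucc Fin.castSucc =
        B.submatrix Fin.castSucc Fin.castSucc + C.submatrix Fin.castSucc Fin.castSucc := rfl
    simp only [cliffPoly, hM, hv, map_add]
    module
  map_smul' c B := by
    have hv : (fun j : Fin m => -Complex.I * (c • B) j.castSucc (Fin.last m)) =
        c • (fun j => -Complex.I * B j.castSucc (Fin.last m)) :=
      funext fun j => mul_left_comm _ _ _
    have hM : (c • B).submatrix Fin.castSucc Fin.castSucc =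
        c • B.submatrix Fin.castSucc Fin.castSucc := rfl
    simp only [cliffPoly, hM, hv, map_smul, RingHom.id_apply]
    module

lemma extPoly_extBlock (g : Fin m → A) (M : Matrix (Fin m) (Fin m) ℂ) (v : Fin m → ℂ) :
    extPoly g (extBlock M v) = cliffPoly g M v := by
  change cliffPoly g _ _ = _
  congr 1
  · ext j k
    simp
  · funext j
    simp [← mul_assoc]

lemma extPoly_commutator {g : Fin m → A} (hg : CliffordRelations g)
    {B C : Matrix (Fin (m + 1)) (Fin (m + 1)) ℂ} (hB : Bᵀ = -B) (hC : Cᵀ = -C) :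
    extPoly g B * extPoly g C - extPoly g C * extPoly g B = (2 : ℂ) • extPoly g (B * C - C * B) := by
  obtain ⟨H, v, hH, rfl⟩ := exists_extBlock_of_transpose_eq_neg hB
  obtain ⟨N, w, hN, rfl⟩ := exists_extBlock_of_transpose_eq_neg hC
  rw [extBlock_commutator hH hN, extPoly_extBlock, extPoly_extBlock, extPoly_extBlock,
    cliffPoly_commutator hg hH hN]

end ExtPoly

section DisplacedGaussianUnitary

variable {n : ℕ}

lemma quadPolyC_eq_cliffPoly (M : Matrix (Fin (2 * n)) (Fin (2 * n)) ℂ) (v : Fin (2 * n) → ℂ) :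
    quadPolyC n M v = cliffPoly (γ n) M v :=
  rfl

lemma extBlockR_map_ofReal (h : Matrix (Fin (2 * n)) (Fin (2 * n)) ℝ) (d : Fin (2 * n) → ℝ) :
    (extBlockR h d).map Complex.ofReal =
      extBlock (h.map Complex.ofReal) (fun j => Complex.I * d j) := by
  ext a b
  induction a using Fin.lastCases <;> induction b using Fin.lastCases <;>
    simp [extBlockR, ← mul_assoc]

lemma quadArg_eq_extPoly (h : Matrix (Fin (2 * n)) (Fin (2 * n)) ℝ) (d : Fin (2 * n) → ℝ) :
    quadArg n h d = extPoly (γ n) ((extBlockR h d).map Complex.ofReal) := by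
  rw [extBlockR_map_ofReal, extPoly_extBlock, quadArg, cliffPoly, quadSum_apply, linSum_apply]
  congr 1
  rw [Finset.smul_sum]
  simp only [smul_smul]

lemma conjTranspose_quadArg {h : Matrix (Fin (2 * n)) (Fin (2 * n)) ℝ} (hh : hᵀ = -h)
    (d : Fin (2 * n) → ℝ) : (quadArg n h d)ᴴ = -quadArg n h d := by
  have hh' : ∀ a b, h b a = -h a b := fun a b => by simpa using congrFun (congrFun hh a) b
  have hstar : (h.map Complex.ofReal)ᴴ = -h.map Complex.ofReal := by
    ext a b; simp [hh' a b]
  rw [quadArg_eq_extPoly, extBlockR_map_ofReal, extPoly_extBlock, ← star_eq_conjTranspose,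
    star_cliffPoly γ_conjTranspose, hstar, ← cliffPoly_neg]
  congr 1
  funext j
  simp

lemma Rmat_map_ofReal (h : Matrix (Fin (2 * n)) (Fin (2 * n)) ℝ) (d : Fin (2 * n) → ℝ) :
    (Rmat n h d).map Complex.ofReal =
      exp ((2 : ℂ) • (extBlockR h d).map Complex.ofReal) := by
  rw [Rmat, Matrix.map_ofReal_exp]
  congr 1
  ext a b
  simp

end DisplacedGaussianUnitary

end DG

open DG in
theorem statement3_general (n : ℕ)
    (h : Matrix (Fin (2 * n)) (Fin (2 * n)) ℝ) (d : Fin (2 * n) → ℝ) (hh : hᵀ = -h)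
    (M : Matrix (Fin (2 * n)) (Fin (2 * n)) ℂ) (v : Fin (2 * n) → ℂ) (hM : Mᵀ = -M)
    (A : Matrix (Fin (2 * n)) (Fin (2 * n)) ℂ) (u : Fin (2 * n) → ℂ)
    (hRel : extBlock A u =
      ((Rmat n h d).map Complex.ofReal) * extBlock M v * ((Rmat n h d).map Complex.ofReal)ᵀ) :
    dgUnitary n h d * quadPolyC n M v * (dgUnitary n h d)ᴴ = quadPolyC n A u := by
  set G := (extBlockR h d).map Complex.ofReal with hG_def
  have hG : Gᵀ = -G := by
    rw [hG_def, extBlockR_map_ofReal]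
    refine transpose_extBlock ?_ _
    rw [← transpose_map, hh]
    ext a b
    simp
  have hRt : ((Rmat n h d).map Complex.ofReal)ᵀ = exp (-((2 : ℂ) • G)) := by
    rw [Rmat_map_ofReal, ← Matrix.exp_transpose, transpose_smul, hG, smul_neg]
  have hUt : (dgUnitary n h d)ᴴ = exp (-quadArg n h d) := by
    rw [dgUnitary, ← Matrix.exp_conjTranspose, conjTranspose_quadArg hh]
  rw [hUt, dgUnitary, quadArg_eq_extPoly, ← hG_def, quadPolyC_eq_cliffPoly,
    quadPolyC_eq_cliffPoly, ← extPoly_extBlock, ← Matrix.map_exp_mul_mul_exp_neg (extPoly (γ n)) (S := {B | Bᵀ = -B})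
    _ _ (transpose_extBlock hM v), ← Rmat_map_ofReal, ← hRt, ← hRel, extPoly_extBlock]
  · intro y hy
    exact Matrix.transpose_commutator_eq_neg (by rw [transpose_smul, hG, smul_neg]) hy
  · intro y hy
    rw [extPoly_commutator cliffordRelations_γ hG hy, smul_mul_assoc, mul_smul_comm, ← smul_sub,
      map_smul]

open DG in
/-- conjugation of a quadratic polynomial `O = (1/2)Σ M_{jk}γ_jγ_k + Σ v_jγ_j`
by a displaced Gaussian unitary `U` yields the quadratic polynomial whose data `(A, u)`
is obtained from `(M, v)` by conjugating the extended matrix by the rotation `R(h,d)`. -/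
theorem statement3 (n : ℕ) (hn : 1 ≤ n)
    (h : Matrix (Fin (2 * n)) (Fin (2 * n)) ℝ) (d : Fin (2 * n) → ℝ) (hh : hᵀ = -h)
    (M : Matrix (Fin (2 * n)) (Fin (2 * n)) ℂ) (v : Fin (2 * n) → ℂ) (hM : Mᵀ = -M)
    (A : Matrix (Fin (2 * n)) (Fin (2 * n)) ℂ) (u : Fin (2 * n) → ℂ) (hA : Aᵀ = -A)
    (hRel : extBlock A u =
      ((Rmat n h d).map Complex.ofReal) * extBlock M v * ((Rmat n h d).map Complex.ofReal)ᵀ) :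
    dgUnitary n h d * quadPolyC n M v * (dgUnitary n h d)ᴴ = quadPolyC n A u :=
  statement3_general n h d hh M v hM A u hRel
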